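/- arXiv:2205.04745 — 4 statements merged into one kernel-verified Lean document; each statement's English description precedes it below -/
import Mathlib

section
/- For all integers c ≥ 2 and n ≥ 1, the binomial coefficient satisfies C(c·n, n) < √(c / ((c−1)·2·π·n)) · (c^c / (c−1)^(c−1))^n · exp(−1/(12·n+1)). -/
/-!
Write `n! = s n · √(2n) (n/e)^n` with Mathlib's Stirling sequence `s`, which tends to `√π`.
Robbins' bounds `√π e^{1/(12n+1)} < s n ≤ √π e^{1/(12n)}` follow from two-sided estimates of
`log s n - log s (n+1)`: then `log s n - 1/(12n)` increases and `log s n - 1/(12n+1)` strictly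
decreases to `log √π`. Inserting the upper bound for `(a+b)!` and the lower bounds for `a!` and
`b!` into `C(a+b, a) = (a+b)!/(a! b!)` bounds `C(a+b, a)`; for `a = n`, `b = (c-1)n` the
exponential factor is at most `e^{-1/(12n+1)}` because `1/(12cn) ≤ 1/(12(c-1)n+1)`.
-/

open Real Stirling Filter Topology
open scoped Nat

theorem lt_log_stirlingSeq_sdiff (n : ℕ) :
    1 / (12 * ((n : ℝ) + 1) + 1) - 1 / (12 * ((n : ℝ) + 2) + 1) <
      log (stirlingSeq (n + 1)) - log (stirlingSeq (n + 2)) := by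
  -- the first term of the series already suffices
  refine lt_of_lt_of_le ?_ (le_hasSum (log_stirlingSeq_sdiff_hasSum n) 0 fun _ _ => by positivity)
  push_cast
  rw [div_sub_div _ _ (by positivity) (by positivity), div_pow, one_pow, pow_one,
    div_lt_iff₀ (by positivity)]
  field_simp
  nlinarith

theorem log_stirlingSeq_sub_one_div_monotone :
    Monotone fun n : ℕ => log (stirlingSeq (n + 1)) - 1 / (12 * ((n : ℝ) + 1)) := by
  refine monotone_nat_of_le_succ fun n => ?_
  have h := log_stirlingSeq_sdiff_le (n + 1)
  have e : 1 / (12 * ((n : ℝ) + 1)) - 1 / (12 * ((n + 1 : ℕ) + 1)) =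
      1 / (12 * ((n + 1 : ℕ) : ℝ) * ((n + 1 : ℕ) + 1)) := by
    push_cast; field_simp; ring
  linarith

theorem log_stirlingSeq_sub_one_div_strictAnti :
    StrictAnti fun n : ℕ => log (stirlingSeq (n + 1)) - 1 / (12 * ((n : ℝ) + 1) + 1) := by
  refine strictAnti_nat_of_succ_lt fun n => ?_
  have h := lt_log_stirlingSeq_sdiff n
  simp only [Nat.cast_add, Nat.cast_one, add_assoc, one_add_one_eq_two]
  linarith

theorem tendsto_log_stirlingSeq_sub_one_div {a : ℝ} (ha : 0 ≤ a) :
    Tendsto (fun n : ℕ => log (stirlingSeq (n + 1)) - 1 / (12 * ((n : ℝ) + 1) + a)) atTop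
      (𝓝 (log √π)) := by
  have hlog := ((continuousAt_log (by positivity)).tendsto).comp
    (tendsto_stirlingSeq_sqrt_pi.comp (tendsto_add_atTop_nat 1))
  have hden : Tendsto (fun n : ℕ => 12 * ((n : ℝ) + 1) + a) atTop atTop :=
    tendsto_atTop_mono (fun n => by linarith) tendsto_natCast_atTop_atTop
  simpa only [sub_zero, Function.comp_def] using
    hlog.sub ((tendsto_const_nhds (x := (1 : ℝ))).div_atTop hden)

theorem sqrt_pi_mul_exp_lt_stirlingSeq {n : ℕ} (hn : n ≠ 0) :
    √π * exp (1 / (12 * (n : ℝ) + 1)) < stirlingSeq n := by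
  obtain ⟨m, rfl⟩ := Nat.exists_eq_succ_of_ne_zero hn
  have hlim := log_stirlingSeq_sub_one_div_strictAnti.antitone.le_of_tendsto
    (tendsto_log_stirlingSeq_sub_one_div zero_le_one) (m + 1)
  have hstep := log_stirlingSeq_sub_one_div_strictAnti (lt_add_one m)
  rw [← exp_log (stirlingSeq'_pos m), ← exp_log (by positivity : 0 < √π), ← exp_add,
    exp_lt_exp]
  push_cast
  linarith

theorem stirlingSeq_le_sqrt_pi_mul_exp {n : ℕ} (hn : n ≠ 0) :
    stirlingSeq n ≤ √π * exp (1 / (12 * (n : ℝ))) := by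
  obtain ⟨m, rfl⟩ := Nat.exists_eq_succ_of_ne_zero hn
  have hlim := log_stirlingSeq_sub_one_div_monotone.ge_of_tendsto
    (by simpa using tendsto_log_stirlingSeq_sub_one_div le_rfl) m
  rw [← exp_log (stirlingSeq'_pos m), ← exp_log (by positivity : 0 < √π), ← exp_add,
    exp_le_exp]
  push_cast
  linarith

theorem factorial_eq_stirlingSeq_mul {n : ℕ} (hn : n ≠ 0) :
    (n ! : ℝ) = stirlingSeq n * (√(2 * n) * (n / exp 1) ^ n) := by
  rw [stirlingSeq, div_mul_cancel₀ _ (by positivity)]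

theorem sqrt_two_mul_div_exp_pow_add_div_mul {a b : ℕ} (ha : a ≠ 0) (hb : b ≠ 0) :
    √(2 * (a + b : ℕ)) * ((a + b : ℕ) / exp 1) ^ (a + b) /
        (√(2 * a) * (a / exp 1) ^ a * (√(2 * b) * (b / exp 1) ^ b)) =
      √((a + b) / (2 * a * b)) * ((a + b) ^ (a + b) / (a ^ a * b ^ b)) := by
  have hsqrt : √((a + b) / (2 * a * b)) = √(2 * (a + b)) / (√(2 * a) * √(2 * b)) := by
    rw [← sqrt_mul (by positivity), ← sqrt_div (by positivity)]
    congr 1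
    field_simp
  rw [hsqrt]
  push_cast
  simp only [div_pow, pow_add]
  field_simp

theorem Nat.choose_add_lt_robbins {a b : ℕ} (ha : a ≠ 0) (hb : b ≠ 0) :
    ((a + b).choose a : ℝ) <
      √((a + b) / (2 * π * a * b)) * ((a + b) ^ (a + b) / (a ^ a * b ^ b)) *
        exp (1 / (12 * (a + b)) - 1 / (12 * a + 1) - 1 / (12 * b + 1)) := by
  have hab : a + b ≠ 0 := by omega
  have hpos {n : ℕ} (hn : n ≠ 0) : 0 < stirlingSeq n :=
    lt_of_lt_of_le (by positivity) (sqrt_pi_le_stirlingSeq hn)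
  have hratio : stirlingSeq (a + b) / (stirlingSeq a * stirlingSeq b) <
      exp (1 / (12 * (a + b)) - 1 / (12 * a + 1) - 1 / (12 * b + 1)) / √π := by
    rw [div_lt_div_iff₀ (mul_pos (hpos ha) (hpos hb)) (by positivity)]
    have hπ : √π * √π = π := mul_self_sqrt pi_pos.le
    calc stirlingSeq (a + b) * √π
        ≤ √π * exp (1 / (12 * (a + b : ℕ))) * √π := by
          gcongr; exact stirlingSeq_le_sqrt_pi_mul_exp hab
      _ = exp (1 / (12 * (a + b)) - 1 / (12 * a + 1) - 1 / (12 * b + 1)) *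
            ((√π * exp (1 / (12 * a + 1))) * (√π * exp (1 / (12 * b + 1)))) := by
          rw [mul_mul_mul_comm, hπ, ← exp_add, mul_left_comm, ← exp_add, mul_right_comm, hπ]
          push_cast
          ring_nf
      _ < _ := by
          gcongr
          · exact sqrt_pi_mul_exp_lt_stirlingSeq ha
          · exact sqrt_pi_mul_exp_lt_stirlingSeq hb
  have hsqrt : √((a + b) / (2 * π * a * b)) = √((a + b) / (2 * a * b)) / √π := by
    rw [← sqrt_div (by positivity)]
    congr 1
    field_simp
  rw [Nat.cast_choose ℝ (Nat.le_add_right a b), Nat.add_sub_cancel_left,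
    factorial_eq_stirlingSeq_mul hab, factorial_eq_stirlingSeq_mul ha,
    factorial_eq_stirlingSeq_mul hb, mul_mul_mul_comm, mul_div_mul_comm,
    sqrt_two_mul_div_exp_pow_add_div_mul ha hb, hsqrt]
  calc _ < exp (1 / (12 * (a + b)) - 1 / (12 * a + 1) - 1 / (12 * b + 1)) / √π *
        (√((a + b) / (2 * a * b)) * ((a + b) ^ (a + b) / (a ^ a * b ^ b))) := by gcongr
    _ = _ := by ring

theorem add_mul_pow_div {x : ℝ} (hx : x ≠ 0) (d n : ℕ) :
    (x + d * x) ^ (n + d * n) / (x ^ n * (d * x) ^ (d * n)) = ((d + 1) ^ (d + 1) / d ^ d) ^ n := by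
  rw [show x + d * x = (d + 1) * x by ring, show n + d * n = (d + 1) * n by ring, pow_mul, pow_mul,
    ← mul_pow, ← div_pow, mul_pow, mul_pow, pow_succ x]
  congr 1
  field_simp

theorem Nat.choose_add_mul_lt {d n : ℕ} (hd : d ≠ 0) (hn : n ≠ 0) :
    ((n + d * n).choose n : ℝ) <
      √((d + 1) / (d * 2 * π * n)) * ((d + 1) ^ (d + 1) / d ^ d) ^ n *
        exp (-1 / (12 * n + 1)) := by
  have hdR : (1 : ℝ) ≤ d := by exact_mod_cast Nat.one_le_iff_ne_zero.mpr hd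
  have hnR : (1 : ℝ) ≤ n := by exact_mod_cast Nat.one_le_iff_ne_zero.mpr hn
  have hsqrt : (n + d * n) / (2 * π * n * (d * n)) = (d + 1) / (d * 2 * π * n) := by
    field_simp
    ring
  have hexp : 1 / (12 * (n + d * n)) - 1 / (12 * n + 1) - 1 / (12 * (d * n) + 1) ≤
      -1 / (12 * (n : ℝ) + 1) := by
    have : 1 / (12 * ((n : ℝ) + d * n)) ≤ 1 / (12 * (d * n) + 1) := by
      gcongr
      nlinarith
    rw [neg_div]
    linarith
  calc _ < _ := Nat.choose_add_lt_robbins hn (Nat.mul_ne_zero hd hn)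
    _ ≤ _ := by
      push_cast
      rw [hsqrt, add_mul_pow_div (by positivity)]
      gcongr

/-- Upper Robbins-type bound on the binomial coefficient `C(c·n, n)`:
for integers `c ≥ 2` and `n ≥ 1`,
`C(cn, n) < √(c / ((c−1)·2·π·n)) · (c^c / (c−1)^(c−1))^n · exp(−1/(12n+1))`. -/
theorem binomial_upper_bound (c n : ℕ) (hc : 2 ≤ c) (hn : 1 ≤ n) :
    ((c * n).choose n : ℝ) <
      Real.sqrt ((c : ℝ) / (((c : ℝ) - 1) * 2 * Real.pi * n)) *
        ((c : ℝ) ^ c / ((c : ℝ) - 1) ^ (c - 1)) ^ n *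
        Real.exp (-1 / (12 * n + 1)) := by
  obtain ⟨d, rfl⟩ : ∃ d, c = d + 1 := ⟨c - 1, by omega⟩
  rw [show (d + 1) * n = n + d * n by ring]
  push_cast
  simpa only [add_sub_cancel_right, Nat.add_sub_cancel] using
    Nat.choose_add_mul_lt (d := d) (by omega) (by omega)
end

section
/- Let B ≥ 1 be an integer, let L be an integrable random variable taking values in the positive integers, and let R be a random variable uniformly distributed on {0, 1, …, B−1} and independent of L. Then E[ ⌊(R + L − 1)/B⌋ + 1 ] = 1 + (E[L] − 1)/B. -/
/-!
Conditioning on the independent uniform offset `R` turns the expectation into the average over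
`r < B` of `E[⌊(r + L - 1)/B⌋ + 1]`. By Hermite's identity `∑_{r<B} ⌊(r + m)/B⌋ = m`, the sum of
these integrands over `r` is `L - 1 + B` pointwise, whose expectation is `E[L] - 1 + B`.
-/

open MeasureTheory ProbabilityTheory Finset

theorem Nat.sum_range_add_div {n : ℕ} (hn : 0 < n) (m : ℕ) :
    ∑ r ∈ range n, (r + m) / n = m := by
  induction m with
  | zero => exact sum_eq_zero fun r hr => Nat.div_eq_of_lt (by simpa using hr)
  | succ m ih =>
    have h := sum_range_succ' (fun r => (r + m) / n) n
    rw [sum_range_succ, ih, Nat.add_div_left m hn] at h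
    simp only [add_right_comm _ 1 m, zero_add] at h
    simp only [← add_assoc]
    omega

theorem Nat.sum_range_add_sub_one_div_add_one {n l : ℕ} (hn : 0 < n) (hl : 1 ≤ l) :
    ∑ r ∈ range n, ((r + l - 1) / n + 1) = l - 1 + n := by
  have h (r : ℕ) : r + l - 1 = r + (l - 1) := by omega
  simp [h, sum_add_distrib, Nat.sum_range_add_div hn]

section IndepFun

variable {Ω β : Type*} [MeasurableSpace Ω] [MeasurableSpace β] {μ : Measure Ω}
  {B : ℕ} {R : Ω → ℕ} {L : Ω → β}

theorem integral_comp_eq_sum_measureReal_mul_of_indepFun (f : ℕ → β → ℝ)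
    (hR : Measurable R) (hL : AEMeasurable L μ) (hRlt : ∀ ω, R ω < B) (hRL : IndepFun R L μ)
    (hf : ∀ r, AEStronglyMeasurable (f r) (μ.map L))
    (hfi : ∀ r < B, Integrable (fun ω => f r (L ω)) μ) :
    ∫ ω, f (R ω) (L ω) ∂μ = ∑ r ∈ range B, μ.real {ω | R ω = r} * ∫ ω, f r (L ω) ∂μ := by
  have hsplit (ω : Ω) :
      f (R ω) (L ω) = ∑ r ∈ range B, {ω | R ω = r}.indicator (fun ω => f r (L ω)) ω := by
    simp [Set.indicator_apply, hRlt ω]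
  have hRr (r : ℕ) : MeasurableSet {ω | R ω = r} := hR (measurableSet_singleton r)
  simp_rw [hsplit]
  rw [integral_finsetSum _ fun r hr => (hfi r (mem_range.mp hr)).indicator (hRr r)]
  refine sum_congr rfl fun r _ => ?_
  rw [integral_indicator (hRr r)]
  exact Indep.setIntegral_eq_mul hR.comap_le hRL hL ⟨{r}, measurableSet_singleton r, rfl⟩ (hf r)

theorem integral_comp_eq_sum_div_of_indepFun_uniform (f : ℕ → β → ℝ)
    (hR : Measurable R) (hL : AEMeasurable L μ) (hRlt : ∀ ω, R ω < B)
    (hRunif : ∀ r < B, μ {ω | R ω = r} = ENNReal.ofReal (1 / B)) (hRL : IndepFun R L μ)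
    (hf : ∀ r, AEStronglyMeasurable (f r) (μ.map L))
    (hfi : ∀ r < B, Integrable (fun ω => f r (L ω)) μ) :
    ∫ ω, f (R ω) (L ω) ∂μ = (∑ r ∈ range B, ∫ ω, f r (L ω) ∂μ) / B := by
  rw [integral_comp_eq_sum_measureReal_mul_of_indepFun f hR hL hRlt hRL hf hfi, sum_div]
  refine sum_congr rfl fun r hr => ?_
  rw [measureReal_def, hRunif r (mem_range.mp hr), ENNReal.toReal_ofReal (by positivity)]
  ring

end IndepFun

/-- If `L` is an integrable random variable with values in the positive integers
and `R` is uniform on `{0, …, B−1}` and independent of `L`, then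
`E[⌊(R + L − 1)/B⌋ + 1] = 1 + (E[L] − 1)/B`. -/
theorem expected_blocks_overlapped
    {Ω : Type*} [MeasurableSpace Ω] (μ : Measure Ω) [IsProbabilityMeasure μ]
    (B : ℕ) (hB : 1 ≤ B) (L R : Ω → ℕ)
    (hLmeas : Measurable L) (hLpos : ∀ ω, 1 ≤ L ω)
    (hLint : Integrable (fun ω => (L ω : ℝ)) μ)
    (hRmeas : Measurable R) (hRlt : ∀ ω, R ω < B)
    (hRunif : ∀ r, r < B → μ {ω | R ω = r} = ENNReal.ofReal (1 / B))
    (hindep : IndepFun R L μ) :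
    ∫ ω, (((R ω + L ω - 1) / B + 1 : ℕ) : ℝ) ∂μ
      = 1 + ((∫ ω, (L ω : ℝ) ∂μ) - 1) / B := by
  have hblocks_int (r : ℕ) : Integrable (fun ω => (((r + L ω - 1) / B + 1 : ℕ) : ℝ)) μ := by
    refine (hLint.add (integrable_const (r : ℝ))).mono' (by fun_prop) (ae_of_all _ fun ω => ?_)
    have := Nat.div_le_self (r + L ω - 1) B
    have := hLpos ω
    rw [Real.norm_natCast, Pi.add_apply]
    exact_mod_cast (by omega : (r + L ω - 1) / B + 1 ≤ L ω + r)
  have hblocks_sum (ω : Ω) :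
      ∑ r ∈ range B, (((r + L ω - 1) / B + 1 : ℕ) : ℝ) = L ω - 1 + B := by
    rw [← Nat.cast_sum, Nat.sum_range_add_sub_one_div_add_one hB (hLpos ω), Nat.cast_add,
      Nat.cast_sub (hLpos ω), Nat.cast_one]
  have hmean_sum :
      ∑ r ∈ range B, ∫ ω, (((r + L ω - 1) / B + 1 : ℕ) : ℝ) ∂μ = (∫ ω, (L ω : ℝ) ∂μ) - 1 + B := by
    rw [← integral_finsetSum _ fun r _ => hblocks_int r,
      integral_congr_ae (ae_of_all _ hblocks_sum),
      integral_add (f := fun ω => (L ω : ℝ) - 1) (hLint.sub (integrable_const 1))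
        (integrable_const _), integral_sub hLint (integrable_const 1)]
    simp only [integral_const, probReal_univ, one_smul]
  have hB0 : (B : ℝ) ≠ 0 := by positivity
  rw [integral_comp_eq_sum_div_of_indepFun_uniform (fun r l => (((r + l - 1) / B + 1 : ℕ) : ℝ))
      hRmeas hLmeas.aemeasurable hRlt hRunif hindep
      (fun _ => measurable_from_top.aestronglyMeasurable) (fun r _ => hblocks_int r), hmean_sum]
  field_simp
  ring
end

section
/- There exists a constant C > 0 such that for every real a ≥ 2, | a·log₂((a²−1)/a²) + log₂((a+1)/(a−1)) − (log₂ e)/a | ≤ C / a³. -/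
/-!
Put `x = 1/a`. In nats the gap is `log (1 - x²) / x + log ((1 + x) / (1 - x)) - x`. Expanding
`log (1 - x²) / x = -∑ x^(2n+1) / (n+1)` and `log ((1 + x) / (1 - x)) = ∑ 2 x^(2n+1) / (2n+1)`,
the terms of order `x` cancel and the gap is `∑_{n ≥ 1} x^(2n+1) / ((n+1)(2n+1))`.
For `0 ≤ x < 1` its terms are nonnegative and dominated by those of `(x³/6) ∑ x^(2n)`,
so `0 ≤ gap ≤ x³ / (6 (1 - x²)) = O(1/a³)`.
-/

open Real

noncomputable def spaceGap (x : ℝ) : ℝ :=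
  log (1 - x ^ 2) / x + (log (1 + x) - log (1 - x)) - x

theorem hasSum_neg_log_one_sub_sq_div {x : ℝ} (h : |x| < 1) :
    HasSum (fun n : ℕ => x ^ (2 * n + 1) / (n + 1)) (-log (1 - x ^ 2) / x) := by
  have hx2 : |x ^ 2| < 1 := by
    rw [abs_pow, sq_lt_one_iff_abs_lt_one, abs_abs]; exact h
  have hterm (n : ℕ) : (x ^ 2) ^ (n + 1) / (n + 1) / x = x ^ (2 * n + 1) / (n + 1) := by
    rcases eq_or_ne x 0 with rfl | hx
    · simp
    · field_simp; ring
  simpa only [hterm] using (hasSum_pow_div_log_of_abs_lt_one hx2).div_const x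

theorem hasSum_spaceGap {x : ℝ} (h : |x| < 1) :
    HasSum (fun n : ℕ => x ^ (2 * n + 3) / ((n + 2) * (2 * n + 3))) (spaceGap x) := by
  have hsum := (hasSum_log_sub_log_of_abs_lt_one h).sub (hasSum_neg_log_one_sub_sq_div h)
  rw [← hasSum_nat_add_iff' 1] at hsum
  convert hsum using 2 with n
  · rfl
  · push_cast
    field_simp
    ring
  · simp [spaceGap]
    ring

theorem spaceGap_nonneg {x : ℝ} (hx₀ : 0 ≤ x) (hx₁ : x < 1) : 0 ≤ spaceGap x :=
  (hasSum_spaceGap (abs_lt.2 ⟨by linarith, hx₁⟩)).nonneg fun n => by positivity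

theorem spaceGap_le {x : ℝ} (hx₀ : 0 ≤ x) (hx₁ : x < 1) :
    spaceGap x ≤ x ^ 3 / 6 * (1 - x ^ 2)⁻¹ := by
  have hgeom := (hasSum_geometric_of_lt_one (sq_nonneg x) (by nlinarith)).mul_left (x ^ 3 / 6)
  refine hasSum_le (fun n => ?_) (hasSum_spaceGap (abs_lt.2 ⟨by linarith, hx₁⟩)) hgeom
  have hden : (6 : ℝ) ≤ (n + 2) * (2 * n + 3) := by nlinarith [n.cast_nonneg (α := ℝ)]
  calc x ^ (2 * n + 3) / ((n + 2) * (2 * n + 3)) ≤ x ^ (2 * n + 3) / 6 := by gcongr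
    _ = x ^ 3 / 6 * (x ^ 2) ^ n := by ring

theorem gap_eq_spaceGap_inv_div_log_two {a : ℝ} (ha : 1 < a) :
    a * logb 2 ((a ^ 2 - 1) / a ^ 2) + logb 2 ((a + 1) / (a - 1)) - logb 2 (exp 1) / a
      = spaceGap a⁻¹ / log 2 := by
  have hx₁ : a⁻¹ < 1 := inv_lt_one_of_one_lt₀ ha
  have hsq : (a ^ 2 - 1) / a ^ 2 = 1 - a⁻¹ ^ 2 := by field_simp
  have hquot : (a + 1) / (a - 1) = (1 + a⁻¹) / (1 - a⁻¹) := by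
    have : a - 1 ≠ 0 := by linarith
    field_simp
  rw [hsq, hquot, logb, logb, logb, log_exp, log_div (by positivity) (by linarith), spaceGap,
    div_inv_eq_mul]
  field_simp

/-- There is a constant `C > 0` such that for all real `a ≥ 2`,
`|a·log₂((a²−1)/a²) + log₂((a+1)/(a−1)) − (log₂ e)/a| ≤ C/a³`. -/
theorem space_gap_asymptotics :
    ∃ C : ℝ, 0 < C ∧ ∀ a : ℝ, 2 ≤ a →
      |a * Real.logb 2 ((a ^ 2 - 1) / a ^ 2) + Real.logb 2 ((a + 1) / (a - 1))
          - Real.logb 2 (Real.exp 1) / a| ≤ C / a ^ 3 := by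
  refine ⟨1, one_pos, fun a ha => ?_⟩
  have hx₀ : 0 ≤ a⁻¹ := by positivity
  have hx : a⁻¹ ≤ 1 / 2 := by rw [inv_le_comm₀ (by linarith) (by norm_num)]; linarith
  have hlog2 : 2 / 9 < log 2 := by linarith [log_two_gt_d9]
  rw [gap_eq_spaceGap_inv_div_log_two (by linarith),
    abs_of_nonneg (div_nonneg (spaceGap_nonneg hx₀ (by linarith)) (log_nonneg one_le_two)),
    div_le_iff₀ (by positivity)]
  have hden : (1 - a⁻¹ ^ 2)⁻¹ ≤ 4 / 3 := by
    rw [inv_le_comm₀ (by nlinarith) (by norm_num)]; nlinarith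
  calc spaceGap a⁻¹ ≤ a⁻¹ ^ 3 / 6 * (1 - a⁻¹ ^ 2)⁻¹ := spaceGap_le hx₀ (by linarith)
    _ ≤ a⁻¹ ^ 3 / 6 * (4 / 3) := by gcongr
    _ = 1 / a ^ 3 * (2 / 9) := by ring
    _ ≤ 1 / a ^ 3 * log 2 := by gcongr
end

section
/- For all integers a ≥ 2 and m ≥ 1, log₂ C(a·m, m) > m · ( (a−1)·log₂(a/(a−1)) + log₂ a ) + (1/2)·log₂( a / ((a−1)·2·π·m) ) + log₂( 1 − (a² − a + 1)/(12·a·(a−1)·m) ), and in particular the factor 1 − (a² − a + 1)/(12·a·(a−1)·m) is strictly positive for all such a and m. -/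
/-!
Robbins' bounds `√(2πn) (n/e)ⁿ e^{1/(12n+1)} < n! ≤ √(2πn) (n/e)ⁿ e^{1/(12n)}` give
`log C(n, k) > n log n - k log k - (n-k) log (n-k) + ½ log (n / (2πk(n-k)))
  + 1/(12n+1) - 1/(12k) - 1/(12(n-k))`.
They follow by telescoping the step bounds
`1/(12n+1) - 1/(12n+13) < log sₙ - log sₙ₊₁ ≤ 1/(12n) - 1/(12(n+1))` for the Stirling sequence
`sₙ = n! / (√(2n) (n/e)ⁿ)`, which tends to `√π`; for the lower step bound the first two terms of
the series for `log sₙ - log sₙ₊₁` suffice. For `n = am`, `k = m` the error terms equal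
`-ε - 1/(N(N+1))` with `ε = (a²-a+1)/(12a(a-1)m)` and `N = 12am`, and
`log (1 - ε) ≤ -ε - ε²/2` absorbs the second one.
-/

open Real Filter Topology Finset
open scoped Nat

section Telescoping

variable {f g : ℕ → ℝ} {L : ℝ} {n : ℕ}

theorem le_add_of_sub_succ_le (hf : Tendsto f atTop (𝓝 L)) (hg : Tendsto g atTop (𝓝 0))
    (h : ∀ k, n ≤ k → f k - f (k + 1) ≤ g k - g (k + 1)) : f n ≤ L + g n := by
  have hmono : Monotone fun j => f (j + n) - g (j + n) := monotone_nat_of_le_succ fun j => by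
    have := h (j + n) (by omega)
    rw [add_right_comm j 1 n]
    linarith
  have := hmono.ge_of_tendsto ((hf.sub hg).comp (tendsto_add_atTop_nat n)) 0
  simp only [zero_add, sub_zero] at this
  linarith

theorem add_lt_of_sub_succ_lt (hf : Tendsto f atTop (𝓝 L)) (hg : Tendsto g atTop (𝓝 0))
    (h : ∀ k, n ≤ k → g k - g (k + 1) < f k - f (k + 1)) : L + g n < f n := by
  have hanti : Antitone fun j => f (j + n) - g (j + n) := antitone_nat_of_succ_le fun j => by
    have := h (j + n) (by omega)
    rw [add_right_comm j 1 n]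
    linarith
  have := hanti.le_of_tendsto ((hf.sub hg).comp (tendsto_add_atTop_nat n)) 1
  simp only [sub_zero, add_comm 1 n] at this
  linarith [h n le_rfl]

end Telescoping

theorem tendsto_one_div_mul_add_nhds_zero {c : ℝ} (hc : 0 < c) (d : ℝ) :
    Tendsto (fun k : ℕ => 1 / (c * k + d)) atTop (𝓝 0) := by
  simp only [one_div]
  exact (tendsto_atTop_add_const_right _ d
    (tendsto_natCast_atTop_atTop.const_mul_atTop hc)).inv_tendsto_atTop

namespace Stirling

theorem log_stirlingSeq_sdiff_gt {n : ℕ} (hn : n ≠ 0) :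
    1 / (12 * n + 1) - 1 / (12 * (n + 1) + 1)
      < log (stirlingSeq n) - log (stirlingSeq (n + 1)) := by
  obtain ⟨m, rfl⟩ := Nat.exists_eq_succ_of_ne_zero hn
  refine lt_of_lt_of_le ?_ <|
    sum_le_hasSum (range 2) (fun k _ => by positivity) (log_stirlingSeq_sdiff_hasSum m)
  simp only [sum_range_succ, sum_range_zero]
  push_cast
  rw [← sub_pos]
  field_simp
  ring_nf
  positivity

theorem tendsto_log_stirlingSeq :
    Tendsto (fun n => log (stirlingSeq n)) atTop (𝓝 (log √π)) :=
  tendsto_stirlingSeq_sqrt_pi.log (by positivity)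

theorem log_stirlingSeq_le {n : ℕ} (hn : n ≠ 0) :
    log (stirlingSeq n) ≤ log √π + 1 / (12 * n) := by
  refine le_add_of_sub_succ_le tendsto_log_stirlingSeq
    (by simpa only [add_zero] using tendsto_one_div_mul_add_nhds_zero (c := 12) (by norm_num) 0)
    fun k hnk => ?_
  have hk : (0 : ℝ) < k := by exact_mod_cast Nat.pos_of_ne_zero (by omega)
  push_cast
  convert log_stirlingSeq_sdiff_le k using 1
  field_simp
  ring

theorem log_stirlingSeq_gt {n : ℕ} (hn : n ≠ 0) :
    log √π + 1 / (12 * n + 1) < log (stirlingSeq n) := by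
  refine add_lt_of_sub_succ_lt tendsto_log_stirlingSeq
    (tendsto_one_div_mul_add_nhds_zero (by norm_num) 1) fun k hnk => ?_
  push_cast
  exact log_stirlingSeq_sdiff_gt (by omega)

theorem log_factorial_eq (n : ℕ) :
    log n ! = log (stirlingSeq n) + log (2 * n) / 2 + n * log n - n := by
  rcases eq_or_ne n 0 with rfl | hn
  · simp [stirlingSeq_zero]
  rw [log_stirlingSeq_formula, log_div (by positivity) (exp_pos 1).ne', log_exp]
  ring

end Stirling

open Stirling in
theorem log_choose_gt {n k : ℕ} (hk : 0 < k) (hkn : k < n) :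
    n * log n - k * log k - (n - k) * log (n - k) + log (n / (2 * π * k * (n - k))) / 2
      + (1 / (12 * n + 1) - 1 / (12 * k) - 1 / (12 * (n - k))) < log (n.choose k) := by
  have hn_pos : (0 : ℝ) < n := by exact_mod_cast hk.trans hkn
  have hk_pos : (0 : ℝ) < k := by exact_mod_cast hk
  have hnk_pos : (0 : ℝ) < n - k := by rw [sub_pos]; exact_mod_cast hkn
  have hchoose : log (n.choose k) = log n ! - log k ! - log (n - k)! := by
    rw [Nat.cast_choose ℝ hkn.le, log_div (by positivity) (by positivity),
      log_mul (by positivity) (by positivity)]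
    ring
  have hcast : ((n - k : ℕ) : ℝ) = n - k := Nat.cast_sub hkn.le
  rw [hchoose, log_factorial_eq, log_factorial_eq, log_factorial_eq, hcast,
    log_div hn_pos.ne' (by positivity), log_mul (by positivity) hnk_pos.ne',
    log_mul (by positivity) hk_pos.ne', log_mul two_ne_zero pi_ne_zero,
    log_mul two_ne_zero hn_pos.ne', log_mul two_ne_zero hk_pos.ne',
    log_mul two_ne_zero hnk_pos.ne']
  have hsn := log_stirlingSeq_gt (n := n) (by omega)
  have hsk := log_stirlingSeq_le (n := k) (by omega)
  have hsnk := log_stirlingSeq_le (n := n - k) (by omega)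
  rw [hcast] at hsnk
  rw [log_sqrt pi_pos.le] at hsn hsk hsnk
  linarith

theorem log_one_sub_le_neg_sub_sq_div_two {x : ℝ} (h0 : 0 ≤ x) (h1 : x < 1) :
    log (1 - x) ≤ -x - x ^ 2 / 2 := by
  have := sum_le_hasSum (range 2) (fun k _ => by positivity)
    (hasSum_pow_div_log_of_abs_lt_one (abs_lt.2 ⟨by linarith, h1⟩))
  norm_num [sum_range_succ] at this
  linarith

section Remainder

variable {a m : ℝ}

theorem robbins_remainder_denom_pos (ha : 2 ≤ a) (hm : 1 ≤ m) : 0 < 12 * a * (a - 1) * m :=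
  mul_pos (mul_pos (by linarith) (by linarith)) (by linarith)

theorem robbins_remainder_lt_one (ha : 2 ≤ a) (hm : 1 ≤ m) :
    (a ^ 2 - a + 1) / (12 * a * (a - 1) * m) < 1 := by
  rw [div_lt_one (robbins_remainder_denom_pos ha hm)]
  nlinarith [mul_le_mul_of_nonneg_left hm (by nlinarith : (0 : ℝ) ≤ 12 * a * (a - 1))]

theorem log_one_sub_robbins_remainder_le (ha : 2 ≤ a) (hm : 1 ≤ m) :
    log (1 - (a ^ 2 - a + 1) / (12 * a * (a - 1) * m))
      ≤ 1 / (12 * (a * m) + 1) - 1 / (12 * m) - 1 / (12 * (a * m - m)) := by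
  set ε := (a ^ 2 - a + 1) / (12 * a * (a - 1) * m) with hε
  have hm0 : 0 < m := by linarith
  have ha0 : 0 < a := by linarith
  have ha1 : a - 1 ≠ 0 := by linarith
  have hε_ge : 1 / (12 * m) ≤ ε := by
    rw [hε, div_le_div_iff₀ (by positivity) (robbins_remainder_denom_pos ha hm)]
    nlinarith
  have hsplit : 1 / (12 * (a * m) + 1) - 1 / (12 * m) - 1 / (12 * (a * m - m))
      = -ε - 1 / (12 * (a * m) * (12 * (a * m) + 1)) := by
    rw [hε, show a * m - m = (a - 1) * m by ring]
    field_simp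
    ring
  have hsmall : 1 / (12 * (a * m) * (12 * (a * m) + 1)) ≤ ε ^ 2 / 2 := calc
    _ ≤ 1 / (288 * m ^ 2) := by
      rw [div_le_div_iff₀ (by positivity) (by positivity)]
      nlinarith [mul_le_mul_of_nonneg_right ha hm0.le]
    _ = (1 / (12 * m)) ^ 2 / 2 := by field_simp; ring
    _ ≤ ε ^ 2 / 2 := by gcongr
  rw [hsplit]
  linarith [log_one_sub_le_neg_sub_sq_div_two (hε_ge.trans' (by positivity))
    (robbins_remainder_lt_one ha hm)]

end Remainder

theorem mul_log_mul_sub_eq {a m : ℝ} (ha : 1 < a) (hm : 0 < m) :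
    a * m * log (a * m) - m * log m - (a * m - m) * log (a * m - m)
      = m * ((a - 1) * log (a / (a - 1)) + log a) := by
  have ha1 : a - 1 ≠ 0 := by linarith
  rw [show a * m - m = (a - 1) * m by ring, log_mul (by linarith) hm.ne', log_mul ha1 hm.ne',
    log_div (by linarith) ha1]
  ring

theorem log_choose_mul_gt {a m : ℕ} (ha : 2 ≤ a) (hm : 1 ≤ m) :
    (m : ℝ) * ((a - 1) * log (a / (a - 1)) + log a) + 1 / 2 * log (a / ((a - 1) * 2 * π * m))
      + log (1 - ((a : ℝ) ^ 2 - a + 1) / (12 * a * (a - 1) * m)) < log ((a * m).choose m) := by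
  have hA : (2 : ℝ) ≤ a := by exact_mod_cast ha
  have hM : (1 : ℝ) ≤ m := by exact_mod_cast hm
  have hratio : (a * m : ℝ) / (2 * π * m * (a * m - m)) = a / ((a - 1) * 2 * π * m) := by
    rw [show (a * m - m : ℝ) = (a - 1) * m by ring]
    field_simp
  have h := log_choose_gt (n := a * m) (k := m) (by omega) (by nlinarith)
  push_cast at h
  rw [mul_log_mul_sub_eq (by linarith) (by linarith), hratio] at h
  linarith [log_one_sub_robbins_remainder_le hA hM]

/-- For integers `a ≥ 2` and `m ≥ 1`, the information-theoretic lower bound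
for strictly monotonic sequences satisfies
`log₂ C(a·m, m) > m·((a−1)·log₂(a/(a−1)) + log₂ a)
  + (1/2)·log₂(a/((a−1)·2·π·m)) + log₂(1 − (a²−a+1)/(12·a·(a−1)·m))`,
and the last factor `1 − (a²−a+1)/(12·a·(a−1)·m)` is strictly positive. -/
theorem log2_choose_monotonic_lower_bound (a m : ℕ) (ha : 2 ≤ a) (hm : 1 ≤ m) :
    (m : ℝ) * (((a : ℝ) - 1) * Real.logb 2 ((a : ℝ) / ((a : ℝ) - 1)) + Real.logb 2 (a : ℝ))
        + (1 / 2) * Real.logb 2 ((a : ℝ) / (((a : ℝ) - 1) * 2 * Real.pi * m))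
        + Real.logb 2 (1 - ((a : ℝ) ^ 2 - a + 1) / (12 * a * ((a : ℝ) - 1) * m))
      < Real.logb 2 ((a * m).choose m : ℝ) ∧
    0 < 1 - ((a : ℝ) ^ 2 - a + 1) / (12 * a * ((a : ℝ) - 1) * m) := by
  refine ⟨?_, sub_pos.2 (robbins_remainder_lt_one (by exact_mod_cast ha) (by exact_mod_cast hm))⟩
  have h := div_lt_div_of_pos_right (log_choose_mul_gt ha hm) (log_pos one_lt_two)
  simp only [logb]
  refine lt_of_eq_of_lt ?_ h
  ring
end
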